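/- arXiv:2406.14965 — 6 statements merged into one kernel-verified Lean document; each statement's English description precedes it below -/
import Mathlib

section
/- The function f(p) = 1/(A + (P_T - P_W)/(M p) - n P_W/(M p ln p)) defined for p ∈ (0,1), where A = ((n-1)P_W + P_T)(M+δ-1)/M, with n ≥ 1, M ≥ 1, δ ≥ 0, P_T > P_W > 0, is strictly increasing on (0, p_m) and strictly decreasing on (p_m, 1), where p_m = exp((n - sqrt(n² + 4n(P_T/P_W - 1)))/(2(P_T/P_W - 1))). -/
/-!
With `b = P_T/P_W - 1 > 0` we have `1/f = A + (P_W/M) cost` where `cost p = b/p - n/(p log p)`,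
and, writing `t = log p`, `cost' p = -(b t² - n t - n)/(p t)²`. The quadratic
`b t² - n t - n` has exactly one negative root `t_m = (n - √(n² + 4nb))/(2b)`, is positive to its
left and negative between it and `0`. So `cost` decreases on `(0, e^{t_m})` and increases on
`(e^{t_m}, 1)`, and since `A ≥ 0` and `cost > 0` on `(0, 1)`, taking reciprocals gives the claim
with `p_m = e^{t_m}`.
-/

open Real Set

namespace CBAloha

variable {b n : ℝ}

noncomputable def cost (b n p : ℝ) : ℝ := b / p - n / (p * log p)

noncomputable def negRoot (b n : ℝ) : ℝ := (n - √(n ^ 2 + 4 * n * b)) / (2 * b)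

lemma negRoot_neg (hb : 0 < b) (hn : 0 < n) : negRoot b n < 0 := by
  have hs : n < √(n ^ 2 + 4 * n * b) :=
    lt_sqrt_of_sq_lt (by nlinarith [mul_pos hn hb])
  exact div_neg_of_neg_of_pos (by linarith) (by linarith)

lemma negRoot_isRoot (hb : 0 < b) (hn : 0 ≤ n) :
    b * negRoot b n ^ 2 - n * negRoot b n - n = 0 := by
  have hs := sq_sqrt (show 0 ≤ n ^ 2 + 4 * n * b by positivity)
  unfold negRoot
  generalize √(n ^ 2 + 4 * n * b) = s at hs ⊢
  field_simp
  linear_combination hs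

lemma quadratic_eq_mul (hb : 0 < b) (hn : 0 ≤ n) (t : ℝ) :
    b * t ^ 2 - n * t - n = (negRoot b n - t) * (n - b * (t + negRoot b n)) := by
  linear_combination negRoot_isRoot hb hn

lemma quadratic_pos_of_lt_negRoot (hb : 0 < b) (hn : 0 < n) {t : ℝ} (ht : t < negRoot b n) :
    0 < b * t ^ 2 - n * t - n := by
  have hr := negRoot_neg hb hn
  rw [quadratic_eq_mul hb hn.le]
  exact mul_pos (by linarith) (by nlinarith)

lemma quadratic_neg_of_negRoot_lt (hb : 0 < b) (hn : 0 < n) {t : ℝ} (ht : negRoot b n < t)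
    (ht0 : t < 0) : b * t ^ 2 - n * t - n < 0 := by
  have hr := negRoot_neg hb hn
  rw [quadratic_eq_mul hb hn.le]
  exact mul_neg_of_neg_of_pos (by linarith) (by nlinarith)

lemma hasDerivAt_cost {p : ℝ} (hp : p ≠ 0) (hlog : log p ≠ 0) :
    HasDerivAt (cost b n) (-(b * log p ^ 2 - n * log p - n) / (p ^ 2 * log p ^ 2)) p := by
  refine (((hasDerivAt_const p b).div (hasDerivAt_id' p) hp).sub
    ((hasDerivAt_const p n).div (hasDerivAt_mul_log hp) (mul_ne_zero hp hlog))).congr_deriv ?_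
  field_simp
  ring

lemma cost_pos (hb : 0 < b) (hn : 0 ≤ n) {p : ℝ} (hp : p ∈ Ioo 0 1) : 0 < cost b n p := by
  have hlog : log p < 0 := log_neg hp.1 hp.2
  have : n / (p * log p) ≤ 0 := div_nonpos_of_nonneg_of_nonpos hn (by nlinarith [hp.1])
  have : 0 < b / p := div_pos hb hp.1
  unfold cost
  linarith

lemma continuousOn_cost : ContinuousOn (cost b n) (Ioo 0 1) := fun _ hp =>
  (hasDerivAt_cost hp.1.ne' (log_neg hp.1 hp.2).ne).continuousAt.continuousWithinAt

lemma deriv_cost {p : ℝ} (hp : p ∈ Ioo 0 1) :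
    deriv (cost b n) p = -(b * log p ^ 2 - n * log p - n) / (p ^ 2 * log p ^ 2) :=
  (hasDerivAt_cost hp.1.ne' (log_neg hp.1 hp.2).ne).deriv

lemma strictAntiOn_cost (hb : 0 < b) (hn : 0 < n) :
    StrictAntiOn (cost b n) (Ioo 0 (exp (negRoot b n))) := by
  have hsub : Ioo 0 (exp (negRoot b n)) ⊆ Ioo 0 1 :=
    Ioo_subset_Ioo_right (exp_lt_one_iff.mpr (negRoot_neg hb hn)).le
  refine strictAntiOn_of_deriv_neg (convex_Ioo _ _) (continuousOn_cost.mono hsub) fun p hp => ?_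
  rw [interior_Ioo] at hp
  have hlog : log p < negRoot b n := (log_lt_iff_lt_exp hp.1).mpr hp.2
  rw [deriv_cost (hsub hp)]
  exact div_neg_of_neg_of_pos (neg_neg_of_pos (quadratic_pos_of_lt_negRoot hb hn hlog))
    (mul_pos (pow_pos hp.1 2) (sq_pos_of_neg (log_neg hp.1 (hsub hp).2)))

lemma strictMonoOn_cost (hb : 0 < b) (hn : 0 < n) :
    StrictMonoOn (cost b n) (Ioo (exp (negRoot b n)) 1) := by
  have hsub : Ioo (exp (negRoot b n)) 1 ⊆ Ioo 0 1 := Ioo_subset_Ioo_left (exp_pos _).le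
  refine strictMonoOn_of_deriv_pos (convex_Ioo _ _) (continuousOn_cost.mono hsub) fun p hp => ?_
  rw [interior_Ioo] at hp
  have hp' := hsub hp
  have hlog : negRoot b n < log p := (lt_log_iff_exp_lt hp'.1).mpr hp.1
  have hlog0 : log p < 0 := log_neg hp'.1 hp'.2
  rw [deriv_cost hp']
  exact div_pos (neg_pos_of_neg (quadratic_neg_of_negRoot_lt hb hn hlog hlog0))
    (mul_pos (pow_pos hp'.1 2) (sq_pos_of_neg hlog0))

end CBAloha

open CBAloha in
/-- Saturated CB-Aloha lifetime throughput `f` is strictly increasing on `(0, p_m)`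
and strictly decreasing on `(p_m, 1)`. -/
theorem stmt0 (n M δ P_T P_W : ℝ) (hn : 1 ≤ n) (hM : 1 ≤ M) (hδ : 0 ≤ δ)
    (hPW : 0 < P_W) (hPT : P_W < P_T)
    (A p_m : ℝ)
    (hA : A = ((n - 1) * P_W + P_T) * (M + δ - 1) / M)
    (hpm : p_m = Real.exp ((n - Real.sqrt (n ^ 2 + 4 * n * (P_T / P_W - 1))) /
      (2 * (P_T / P_W - 1))))
    (f : ℝ → ℝ)
    (hf : ∀ p, f p = 1 / (A + (P_T - P_W) / (M * p) - n * P_W / (M * p * Real.log p))) :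
    StrictMonoOn f (Set.Ioo 0 p_m) ∧ StrictAntiOn f (Set.Ioo p_m 1) := by
  set b := P_T / P_W - 1
  have hb : 0 < b := sub_pos.mpr ((one_lt_div hPW).mpr hPT)
  have hn0 : 0 < n := by linarith
  have hc : 0 < P_W / M := div_pos hPW (by linarith)
  have hA0 : 0 ≤ A := by
    rw [hA]
    exact div_nonneg (mul_nonneg (by nlinarith) (by linarith)) (by linarith)
  have hf' : ∀ p, f p = 1 / (A + P_W / M * cost b n p) := fun p => by
    rw [hf, cost]
    simp only [b]
    field_simp
    ring
  have hf_lt : ∀ {x y}, y ∈ Ioo 0 1 → cost b n y < cost b n x → f x < f y := fun hy h => by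
    rw [hf', hf']
    have hden := add_pos_of_nonneg_of_pos hA0 (mul_pos hc (cost_pos hb hn0.le hy))
    exact one_div_lt_one_div_of_lt hden (by gcongr)
  obtain rfl : p_m = exp (negRoot b n) := hpm
  have hpm1 : exp (negRoot b n) < 1 := exp_lt_one_iff.mpr (negRoot_neg hb hn0)
  refine ⟨fun x hx y hy hxy => ?_, fun x hx y hy hxy => ?_⟩
  · exact hf_lt ⟨hy.1, hy.2.trans hpm1⟩ (strictAntiOn_cost hb hn0 hx hy hxy)
  · exact hf_lt ⟨(exp_pos _).trans hx.1, hx.2⟩ (strictMonoOn_cost hb hn0 hx hy hxy)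
end

section
/- For n ≥ 1, E > 0, σ > 0, P_T > P_W > 0, the function U(p) = (E/σ)/((P_T - P_W)/p - n·P_W/(p·ln p)) on (0,1) attains its maximum at p = p_m = exp((n - sqrt(n² + 4n(P_T/P_W - 1)))/(2(P_T/P_W - 1))); U is strictly increasing on (0, p_m) and strictly decreasing on (p_m, 1). -/
/-!
With `k = P_T / P_W - 1` the throughput is `U = (E / σ) / (P_W * f)` where `f = alohaCost k n`,
`f p = k / p - n / (p log p)` is positive on `(0, 1)`, so `U` rises exactly where `f` falls.
Writing `t = log p`, one finds `f' p = -(k t² - n t - n) / (p t)²`. The quadratic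
`k t² - n t - n` has roots `(n ± √(n² + 4 n k)) / (2 k)` of opposite signs, so on `t < 0` it is
positive below the negative root `t₀` and negative above it: `f` decreases on `(0, exp t₀]` and
increases on `[exp t₀, 1)`, and `p_m = exp t₀`.
-/

open Real Set

section
variable {α 𝕜 : Type*} [Preorder α] [Field 𝕜] [LinearOrder 𝕜] [IsStrictOrderedRing 𝕜]
  {f : α → 𝕜} {s : Set α} {c : 𝕜}

lemma StrictAntiOn.const_div (hf : StrictAntiOn f s)
    (hpos : ∀ x ∈ s, 0 < f x) (hc : 0 < c) : StrictMonoOn (fun x => c / f x) s :=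
  fun _ hx _ hy hxy => div_lt_div_of_pos_left hc (hpos _ hy) (hf hx hy hxy)

lemma StrictMonoOn.const_div (hf : StrictMonoOn f s)
    (hpos : ∀ x ∈ s, 0 < f x) (hc : 0 < c) : StrictAntiOn (fun x => c / f x) s :=
  fun _ hx _ hy hxy => div_lt_div_of_pos_left hc (hpos _ hx) (hf hx hy hxy)

end

noncomputable def alohaCost (k n p : ℝ) : ℝ := k / p - n / (p * log p)

noncomputable def alohaOptimum (k n : ℝ) : ℝ := (n - √(n ^ 2 + 4 * n * k)) / (2 * k)

section
variable {k n : ℝ}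

lemma quadratic_eq_alohaOptimum_factor (hk : k ≠ 0) (hdisc : 0 ≤ n ^ 2 + 4 * n * k) (t : ℝ) :
    k * t ^ 2 - n * t - n =
      k * (t - alohaOptimum k n) * (t - (n + √(n ^ 2 + 4 * n * k)) / (2 * k)) := by
  have hs := sq_sqrt hdisc
  unfold alohaOptimum
  set s := √(n ^ 2 + 4 * n * k)
  field_simp
  linear_combination hs

lemma alohaOptimum_neg (hk : 0 < k) (hn : 0 < n) : alohaOptimum k n < 0 := by
  have : n < √(n ^ 2 + 4 * n * k) := by
    rw [lt_sqrt hn.le]; nlinarith [mul_pos hn hk]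
  exact div_neg_of_neg_of_pos (by linarith) (by linarith)

lemma quadratic_pos_of_lt_alohaOptimum (hk : 0 < k) (hn : 0 ≤ n) {t : ℝ}
    (ht : t < alohaOptimum k n) : 0 < k * t ^ 2 - n * t - n := by
  have hdisc : 0 ≤ n ^ 2 + 4 * n * k := by positivity
  have hle : alohaOptimum k n ≤ (n + √(n ^ 2 + 4 * n * k)) / (2 * k) := by
    unfold alohaOptimum; gcongr; linarith [sqrt_nonneg (n ^ 2 + 4 * n * k)]
  rw [quadratic_eq_alohaOptimum_factor hk.ne' hdisc]
  exact mul_pos_of_neg_of_neg (mul_neg_of_pos_of_neg hk (by linarith)) (by linarith)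

lemma quadratic_neg_of_alohaOptimum_lt (hk : 0 < k) (hn : 0 ≤ n) {t : ℝ}
    (ht₀ : alohaOptimum k n < t) (ht : t < 0) : k * t ^ 2 - n * t - n < 0 := by
  have hdisc : 0 ≤ n ^ 2 + 4 * n * k := by positivity
  have hroot : 0 ≤ (n + √(n ^ 2 + 4 * n * k)) / (2 * k) := by positivity
  rw [quadratic_eq_alohaOptimum_factor hk.ne' hdisc]
  exact mul_neg_of_pos_of_neg (mul_pos hk (by linarith)) (by linarith)

lemma hasDerivAt_alohaCost {p : ℝ} (hp : 0 < p) (hlog : log p ≠ 0) :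
    HasDerivAt (alohaCost k n) (-(k * log p ^ 2 - n * log p - n) / (p * log p) ^ 2) p := by
  have hpl : p * log p ≠ 0 := mul_ne_zero hp.ne' hlog
  have h : HasDerivAt (fun x => k * x⁻¹ - n * (x * log x)⁻¹)
      (k * -(p ^ 2)⁻¹ - n * (-(1 * log p + p * p⁻¹) / (p * log p) ^ 2)) p :=
    ((hasDerivAt_inv hp.ne').const_mul k).sub
      ((((hasDerivAt_id' p).mul (hasDerivAt_log hp.ne')).inv hpl).const_mul n)
  convert h using 1
  · funext x; simp only [alohaCost, div_eq_mul_inv]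
  · field_simp; ring

lemma alohaCost_pos (hk : 0 < k) (hn : 0 ≤ n) {p : ℝ} (hp : p ∈ Ioo 0 1) :
    0 < alohaCost k n p := by
  have : p * log p < 0 := mul_neg_of_pos_of_neg hp.1 (log_neg hp.1 hp.2)
  have : n / (p * log p) ≤ 0 := div_nonpos_of_nonneg_of_nonpos hn this.le
  have : 0 < k / p := div_pos hk hp.1
  unfold alohaCost; linarith

lemma exp_alohaOptimum_mem_Ioo (hk : 0 < k) (hn : 0 < n) : exp (alohaOptimum k n) ∈ Ioo 0 1 :=
  ⟨exp_pos _, exp_lt_one_iff.2 (alohaOptimum_neg hk hn)⟩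

lemma continuousOn_alohaCost : ContinuousOn (alohaCost k n) (Ioo 0 1) := fun _ hp =>
  (hasDerivAt_alohaCost hp.1 (log_neg hp.1 hp.2).ne).continuousAt.continuousWithinAt

lemma Ioc_exp_alohaOptimum_subset (hk : 0 < k) (hn : 0 < n) :
    Ioc 0 (exp (alohaOptimum k n)) ⊆ Ioo 0 1 := fun _ hp =>
  ⟨hp.1, hp.2.trans_lt (exp_alohaOptimum_mem_Ioo hk hn).2⟩

lemma Ico_exp_alohaOptimum_subset : Ico (exp (alohaOptimum k n)) 1 ⊆ Ioo 0 1 := fun _ hp =>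
  ⟨(exp_pos _).trans_le hp.1, hp.2⟩

lemma strictAntiOn_alohaCost (hk : 0 < k) (hn : 0 < n) :
    StrictAntiOn (alohaCost k n) (Ioc 0 (exp (alohaOptimum k n))) := by
  have hsub := Ioc_exp_alohaOptimum_subset hk hn
  refine strictAntiOn_of_deriv_neg (convex_Ioc _ _) (continuousOn_alohaCost.mono hsub) ?_
  rw [interior_Ioc]
  intro p hp
  have hlog : log p < 0 := log_neg hp.1 (hsub (Ioo_subset_Ioc_self hp)).2
  have hq : 0 < k * log p ^ 2 - n * log p - n :=
    quadratic_pos_of_lt_alohaOptimum hk hn.le ((log_lt_iff_lt_exp hp.1).2 hp.2)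
  rw [(hasDerivAt_alohaCost hp.1 hlog.ne).deriv]
  exact div_neg_of_neg_of_pos (neg_neg_of_pos hq) (sq_pos_of_neg (mul_neg_of_pos_of_neg hp.1 hlog))

lemma strictMonoOn_alohaCost (hk : 0 < k) (hn : 0 < n) :
    StrictMonoOn (alohaCost k n) (Ico (exp (alohaOptimum k n)) 1) := by
  have hsub : Ico (exp (alohaOptimum k n)) 1 ⊆ Ioo 0 1 := Ico_exp_alohaOptimum_subset
  refine strictMonoOn_of_deriv_pos (convex_Ico _ _) (continuousOn_alohaCost.mono hsub) ?_
  rw [interior_Ico]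
  intro p hp
  have hp₀ : 0 < p := (exp_pos _).trans hp.1
  have hlog : log p < 0 := log_neg hp₀ hp.2
  have hq : k * log p ^ 2 - n * log p - n < 0 :=
    quadratic_neg_of_alohaOptimum_lt hk hn.le ((lt_log_iff_exp_lt hp₀).2 hp.1) hlog
  rw [(hasDerivAt_alohaCost hp₀ hlog.ne).deriv]
  exact div_pos (neg_pos_of_neg hq) (sq_pos_of_neg (mul_neg_of_pos_of_neg hp₀ hlog))

end

/-- The saturated PB-Aloha lifetime throughput `U` attains its maximum on `(0,1)` at `p_m`,
strictly increasing before and strictly decreasing after. -/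
theorem stmt5 (n E σ P_T P_W : ℝ) (hn : 1 ≤ n) (hE : 0 < E) (hσ : 0 < σ)
    (hPW : 0 < P_W) (hPT : P_W < P_T)
    (p_m : ℝ)
    (hpm : p_m = Real.exp ((n - Real.sqrt (n ^ 2 + 4 * n * (P_T / P_W - 1))) /
      (2 * (P_T / P_W - 1))))
    (U : ℝ → ℝ)
    (hU : ∀ p, U p = (E / σ) / ((P_T - P_W) / p - n * P_W / (p * Real.log p))) :
    (∀ p ∈ Set.Ioo (0 : ℝ) 1, U p ≤ U p_m) ∧
    StrictMonoOn U (Set.Ioo 0 p_m) ∧ StrictAntiOn U (Set.Ioo p_m 1) := by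
  set k := P_T / P_W - 1
  have hk : 0 < k := sub_pos.2 ((one_lt_div hPW).2 hPT)
  have hn₀ : 0 < n := one_pos.trans_le hn
  have hU' : U = fun p => E / σ / P_W / alohaCost k n p := by
    funext p
    have hcost : (P_T - P_W) / p - n * P_W / (p * log p) = P_W * alohaCost k n p := by
      unfold alohaCost k
      field_simp
    rw [hU, hcost, ← div_div]
  have hpos : ∀ p ∈ Ioo 0 1, 0 < alohaCost k n p := fun _ => alohaCost_pos hk hn₀.le
  have hc : 0 < E / σ / P_W := by positivity
  have hmono := (strictAntiOn_alohaCost hk hn₀).const_div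
    (fun p hp => hpos p (Ioc_exp_alohaOptimum_subset hk hn₀ hp)) hc
  have hanti := (strictMonoOn_alohaCost hk hn₀).const_div
    (fun p hp => hpos p (Ico_exp_alohaOptimum_subset hp)) hc
  have hpm' : p_m = exp (alohaOptimum k n) := hpm
  rw [← hU', ← hpm'] at hmono hanti
  exact ⟨fun p hp => isMaxOn_Ioo_of_mono_anti hmono.monotoneOn hanti.antitoneOn hp,
    hmono.mono Ioo_subset_Ioc_self, hanti.mono Ioo_subset_Ico_self⟩
end

section
/- Let n ≥ 1, P_T > P_W > 0, M ≥ 1, δ ≥ 0, and define λ_M = (M/n)·(p_m ln p_m)/(p_m ln p_m·(M+δ-1) - 1), where p_m = exp((n - sqrt(n² + 4n(P_T/P_W - 1)))/(2(P_T/P_W - 1))). Then 0 < λ_M ≤ M/(n(e + M + δ - 1)), with equality iff p_m = e^{-1}. -/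
lemma plogp_ge {p : ℝ} (hp : 0 < p) : -(Real.exp 1)⁻¹ ≤ p * Real.log p := by
  have h := Real.add_one_le_exp (-(Real.log p) - 1)
  have he : Real.exp (-(Real.log p) - 1) = p⁻¹ * (Real.exp 1)⁻¹ := by
    rw [Real.exp_sub, Real.exp_neg, Real.exp_log hp, div_eq_mul_inv]
  rw [he] at h
  have h2 := mul_le_mul_of_nonneg_left h hp.le
  have h3 : p * p⁻¹ = 1 := mul_inv_cancel₀ hp.ne'
  nlinarith [Real.exp_pos 1, inv_pos.mpr (Real.exp_pos 1)]

lemma plogp_gt {p : ℝ} (hp : 0 < p) (hne : p ≠ Real.exp (-1)) :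
    -(Real.exp 1)⁻¹ < p * Real.log p := by
  have hx : -(Real.log p) - 1 ≠ 0 := by
    intro h0
    apply hne
    have : Real.log p = -1 := by linarith
    rw [← Real.exp_log hp, this]
  have h := Real.add_one_lt_exp hx
  have he : Real.exp (-(Real.log p) - 1) = p⁻¹ * (Real.exp 1)⁻¹ := by
    rw [Real.exp_sub, Real.exp_neg, Real.exp_log hp, div_eq_mul_inv]
  rw [he] at h
  have h2 := mul_lt_mul_of_pos_left h hp
  have h3 : p * p⁻¹ = 1 := mul_inv_cancel₀ hp.ne'
  nlinarith [Real.exp_pos 1, inv_pos.mpr (Real.exp_pos 1)]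

/-- The regime-boundary arrival rate `λ_M` satisfies `0 < λ_M ≤ M/(n(e+M+δ-1))`,
with equality iff `p_m = e⁻¹`. -/
theorem stmt10 (n M δ P_T P_W : ℝ) (hn : 1 ≤ n) (hM : 1 ≤ M) (hδ : 0 ≤ δ)
    (hPW : 0 < P_W) (hPT : P_W < P_T)
    (p_m lam_M : ℝ)
    (hpm : p_m = Real.exp ((n - Real.sqrt (n ^ 2 + 4 * n * (P_T / P_W - 1))) /
      (2 * (P_T / P_W - 1))))
    (hlamM : lam_M = (M / n) * (p_m * Real.log p_m) /
      (p_m * Real.log p_m * (M + δ - 1) - 1)) :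
    0 < lam_M ∧ lam_M ≤ M / (n * (Real.exp 1 + M + δ - 1)) ∧
    (lam_M = M / (n * (Real.exp 1 + M + δ - 1)) ↔ p_m = Real.exp (-1)) := by
  have hn0 : (0:ℝ) < n := by linarith
  have hM0 : (0:ℝ) < M := by linarith
  have hr : 0 < P_T / P_W - 1 := by
    have : 1 < P_T / P_W := (one_lt_div hPW).mpr hPT
    linarith
  have hp0 : 0 < p_m := hpm ▸ Real.exp_pos _
  -- p_m < 1
  have hsq : n < Real.sqrt (n ^ 2 + 4 * n * (P_T / P_W - 1)) := by
    have h1 : n ^ 2 < n ^ 2 + 4 * n * (P_T / P_W - 1) := by nlinarith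
    have h2 : Real.sqrt (n ^ 2) < Real.sqrt (n ^ 2 + 4 * n * (P_T / P_W - 1)) :=
      Real.sqrt_lt_sqrt (by positivity) h1
    rwa [Real.sqrt_sq hn0.le] at h2
  have hexp : (n - Real.sqrt (n ^ 2 + 4 * n * (P_T / P_W - 1))) /
      (2 * (P_T / P_W - 1)) < 0 :=
    div_neg_of_neg_of_pos (by linarith) (by linarith)
  have hp1 : p_m < 1 := by
    rw [hpm]
    exact Real.exp_lt_one_iff.mpr hexp
  set E := Real.exp 1 with hE
  have hE0 : 0 < E := Real.exp_pos 1
  have hEi : E * E⁻¹ = 1 := mul_inv_cancel₀ hE0.ne'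
  set t := p_m * Real.log p_m with hT
  have ht0 : t < 0 := mul_neg_of_pos_of_neg hp0 (Real.log_neg hp0 hp1)
  have htge : -(E)⁻¹ ≤ t := plogp_ge hp0
  have hD : t * (M + δ - 1) - 1 < 0 := by nlinarith
  have hS : 0 < E + M + δ - 1 := by linarith
  have hSn : 0 < n * (E + M + δ - 1) := by positivity
  have hpos : 0 < lam_M := by
    rw [hlamM]
    apply div_pos_of_neg_of_neg _ hD
    exact mul_neg_of_pos_of_neg (div_pos hM0 hn0) ht0
  refine ⟨hpos, ?_, ?_, ?_⟩
  · rw [hlamM, div_le_iff_of_neg hD, div_mul_eq_mul_div, div_mul_eq_mul_div,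
      div_le_div_iff₀ hSn hn0]
    have hEt : -1 ≤ t * E := by
      have := mul_le_mul_of_nonneg_right htge hE0.le
      nlinarith
    nlinarith [mul_pos hM0 hn0, mul_nonneg (mul_pos hM0 hn0).le (by linarith : (0:ℝ) ≤ t * E + 1)]
  · intro heq
    by_contra hne
    have hst : -(E)⁻¹ < t := plogp_gt hp0 hne
    have hEt : -1 < t * E := by
      have := mul_lt_mul_of_pos_right hst hE0
      nlinarith
    have hlt : lam_M < M / (n * (E + M + δ - 1)) := by
      rw [hlamM, div_lt_iff_of_neg hD, div_mul_eq_mul_div, div_mul_eq_mul_div,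
        div_lt_div_iff₀ hSn hn0]
      nlinarith [mul_pos hM0 hn0, mul_pos (mul_pos hM0 hn0) (by linarith : (0:ℝ) < t * E + 1)]
    linarith [heq ▸ hlt]
  · intro hpe
    have hlog : Real.log p_m = -1 := by rw [hpe, Real.log_exp]
    have ht : t = -E⁻¹ := by
      rw [hT, hlog, hpe, Real.exp_neg]
      ring
    have hden : -E⁻¹ * (M + δ - 1) - 1 = -(E⁻¹ * (E + M + δ - 1)) := by
      linear_combination inv_mul_cancel₀ hE0.ne'
    rw [hlamM, ht, hden,
      div_eq_div_iff (neg_ne_zero.mpr (mul_pos (inv_pos.mpr hE0) hS).ne') hSn.ne']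
    field_simp [hn0.ne']
end

section
/- For p ∈ (0,1), n ≥ 1, P_T > P_W > 0: the map p ↦ (P_T - P_W)/p - nP_W/(p ln p) tends to +∞ as p → 0⁺ and as p → 1⁻, is continuous on (0,1), and attains its minimum value at p_m = exp((n - sqrt(n² + 4n(P_T/P_W - 1)))/(2(P_T/P_W - 1))). -/
/-! With `a = P_T - P_W`, `b = n P_W` and `L = log p`, the derivative of `a / p - b / (p log p)`
is `(b + b L - a L²) / (p L)²`. Its numerator is a concave quadratic in `L` whose unique negative
root is `t = log p_m`, so the map decreases on `(0, p_m]` and increases on `[p_m, 1)`. At `0` the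
term `a / p` already tends to `+∞` since `-b / (p log p) > 0`; at `1`, `p log p → 0⁻`. -/

open Real Set Filter Topology

lemma quadratic_neg_root {c n t : ℝ} (hc : 0 < c) (hn : 0 < n)
    (ht : t = (n - √(n ^ 2 + 4 * n * c)) / (2 * c)) : t < 0 ∧ c * t ^ 2 = n * t + n := by
  have hsq : √(n ^ 2 + 4 * n * c) ^ 2 = n ^ 2 + 4 * n * c := sq_sqrt (by positivity)
  have hlt : n < √(n ^ 2 + 4 * n * c) := by nlinarith [sqrt_nonneg (n ^ 2 + 4 * n * c)]
  have h2ct : 2 * c * t = n - √(n ^ 2 + 4 * n * c) := by rw [ht]; field_simp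
  refine ⟨ht ▸ div_neg_of_neg_of_pos (by linarith) (by linarith), ?_⟩
  have : 4 * c * (c * t ^ 2 - n * t - n) = 0 := by
    linear_combination (2 * c * t - n - √(n ^ 2 + 4 * n * c)) * h2ct + hsq
  linarith [(mul_eq_zero.1 this).resolve_left (by positivity)]

noncomputable def invThroughput (a b p : ℝ) : ℝ := a / p - b / (p * log p)

namespace invThroughput

variable {a b : ℝ}

lemma hasDerivAt {p : ℝ} (hp : p ≠ 0) (hlog : log p ≠ 0) :
    HasDerivAt (invThroughput a b) ((b + b * log p - a * log p ^ 2) / (p * log p) ^ 2) p := by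
  have hfirst := (hasDerivAt_const p a).fun_div (hasDerivAt_id p) hp
  have hsecond := (hasDerivAt_const p b).fun_div (hasDerivAt_mul_log hp) (mul_ne_zero hp hlog)
  refine (hfirst.sub hsecond).congr_deriv ?_
  simp only [id]
  field_simp
  ring

lemma continuousOn : ContinuousOn (invThroughput a b) (Ioo 0 1) := fun _ hp =>
  (hasDerivAt hp.1.ne' (log_neg hp.1 hp.2).ne).continuousAt.continuousWithinAt

lemma tendsto_nhdsGT_zero (ha : 0 < a) (hb : 0 ≤ b) :
    Tendsto (invThroughput a b) (𝓝[>] 0) atTop := by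
  refine tendsto_atTop_mono' _ ?_ (tendsto_inv_nhdsGT_zero.const_mul_atTop ha)
  filter_upwards [Ioo_mem_nhdsGT zero_lt_one] with p hp
  have : b / (p * log p) ≤ 0 := div_nonpos_of_nonneg_of_nonpos hb (mul_log_neg hp.1 hp.2).le
  rw [invThroughput, div_eq_mul_inv]
  linarith

lemma tendsto_nhdsLT_one (hb : 0 < b) :
    Tendsto (invThroughput a b) (𝓝[<] 1) atTop := by
  have hmul_log : Tendsto (fun p => p * log p) (𝓝[<] 1) (𝓝[<] 0) := by
    refine tendsto_nhdsWithin_of_tendsto_nhds_of_eventually_within _ ?_ ?_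
    · simpa using (continuous_mul_log.tendsto 1).mono_left nhdsWithin_le_nhds
    · filter_upwards [Ioo_mem_nhdsLT zero_lt_one] with p hp using mul_log_neg hp.1 hp.2
  have hfirst : Tendsto (fun p => a / p) (𝓝 1) (𝓝 (a / 1)) :=
    tendsto_const_nhds.div tendsto_id one_ne_zero
  rw [div_one] at hfirst
  have hsecond := (tendsto_inv_nhdsLT_zero.comp hmul_log).const_mul_atBot_of_neg (neg_neg_of_pos hb)
  refine ((hfirst.mono_left nhdsWithin_le_nhds).add_atTop hsecond).congr fun p => ?_
  simp [invThroughput, div_eq_mul_inv, sub_eq_add_neg]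

lemma isMinOn {t : ℝ} (ha : 0 < a) (hb : 0 < b) (ht : t < 0) (hroot : a * t ^ 2 = b * t + b) :
    IsMinOn (invThroughput a b) (Ioo 0 1) (exp t) := by
  -- `t` is a root of `b + b L - a L²`, which therefore factors as below
  have hderiv : ∀ p ∈ Ioo (0 : ℝ) 1, HasDerivAt (invThroughput a b)
      ((log p - t) * (b - a * (log p + t)) / (p * log p) ^ 2) p := fun p hp => by
    convert hasDerivAt hp.1.ne' (log_neg hp.1 hp.2).ne using 2
    linear_combination hroot
  have hfactor_pos : ∀ p ∈ Ioo (0 : ℝ) 1, 0 < b - a * (log p + t) := fun p hp => by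
    nlinarith [mul_neg_of_pos_of_neg ha (add_neg (log_neg hp.1 hp.2) ht)]
  have hdiff : DifferentiableOn ℝ (invThroughput a b) (Ioo 0 1) := fun p hp =>
    (hderiv p hp).differentiableAt.differentiableWithinAt
  have hexp_lt_one : exp t < 1 := exp_lt_one_iff.2 ht
  refine isMinOn_Ioo_of_deriv (hderiv _ ⟨exp_pos t, hexp_lt_one⟩).continuousAt
    (hdiff.mono (Ioo_subset_Ioo_right hexp_lt_one.le))
    (hdiff.mono (Ioo_subset_Ioo_left (exp_pos t).le)) (fun p hp => ?_) (fun p hp => ?_)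
  · have hp' : p ∈ Ioo (0 : ℝ) 1 := ⟨hp.1, hp.2.trans hexp_lt_one⟩
    have hlog : log p < t := (log_lt_iff_lt_exp hp.1).2 hp.2
    rw [(hderiv p hp').deriv]
    exact div_nonpos_of_nonpos_of_nonneg
      (mul_nonpos_of_nonpos_of_nonneg (by linarith) (hfactor_pos p hp').le) (sq_nonneg _)
  · have hp' : p ∈ Ioo (0 : ℝ) 1 := ⟨(exp_pos t).trans hp.1, hp.2⟩
    have hlog : t < log p := (lt_log_iff_exp_lt hp'.1).2 hp.1
    rw [(hderiv p hp').deriv]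
    exact div_nonneg (mul_nonneg (by linarith) (hfactor_pos p hp').le) (sq_nonneg _)

end invThroughput

/-- The reciprocal saturated PB-Aloha lifetime throughput tends to `+∞` at both endpoints
of `(0,1)`, is continuous on `(0,1)`, and attains its minimum at `p_m`. -/
theorem stmt12 (n P_T P_W : ℝ) (hn : 1 ≤ n) (hPW : 0 < P_W) (hPT : P_W < P_T)
    (p_m : ℝ)
    (hpm : p_m = Real.exp ((n - Real.sqrt (n ^ 2 + 4 * n * (P_T / P_W - 1))) /
      (2 * (P_T / P_W - 1))))
    (F : ℝ → ℝ)
    (hF : ∀ p, F p = (P_T - P_W) / p - n * P_W / (p * Real.log p)) :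
    Filter.Tendsto F (nhdsWithin 0 (Set.Ioi 0)) Filter.atTop ∧
    Filter.Tendsto F (nhdsWithin 1 (Set.Iio 1)) Filter.atTop ∧
    ContinuousOn F (Set.Ioo 0 1) ∧
    (p_m ∈ Set.Ioo (0 : ℝ) 1 ∧ ∀ p ∈ Set.Ioo (0 : ℝ) 1, F p_m ≤ F p) := by
  have hn₀ : 0 < n := by linarith
  have ha : 0 < P_T - P_W := sub_pos.2 hPT
  have hb : 0 < n * P_W := mul_pos hn₀ hPW
  have hc : 0 < P_T / P_W - 1 := sub_pos.2 ((one_lt_div hPW).2 hPT)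
  set t := (n - √(n ^ 2 + 4 * n * (P_T / P_W - 1))) / (2 * (P_T / P_W - 1))
  obtain ⟨ht, hroot⟩ := quadratic_neg_root hc hn₀ rfl
  have hroot' : (P_T - P_W) * t ^ 2 = n * P_W * t + n * P_W := by
    rw [show P_T - P_W = (P_T / P_W - 1) * P_W by field_simp]
    linear_combination P_W * hroot
  obtain rfl : F = invThroughput (P_T - P_W) (n * P_W) := funext hF
  subst hpm
  exact ⟨invThroughput.tendsto_nhdsGT_zero ha hb.le, invThroughput.tendsto_nhdsLT_one hb,
    invThroughput.continuousOn, ⟨exp_pos t, exp_lt_one_iff.2 ht⟩,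
    isMinOn_iff.1 (invThroughput.isMinOn ha hb ht hroot')⟩
end

section
/- Under the relations n_S/n_F = p/(1-p) (for p ∈ (0,1)), T = n_I + n_W + n_F + n_S(M+δ), the energy constraint P_W(n_I + n_W) + P_T(n_F + n_S(M+δ)) = E/σ, and the saturation conditions n_I = 0 and n_S/T = p ln p / (n p ln p (M+δ-1) - n) (with n ≥ 1, M ≥ 1, δ ≥ 0, P_T ≥ P_W > 0, E, σ > 0), the lifetime satisfies T = (E/σ)(1 - p ln p (M+δ-1)) / (P_W - ((n-1)P_W + P_T)(M+δ-1) p ln p / n - (P_T - P_W) ln p / n). -/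
/-!
With `c = p log p` and `K = M + δ`, the success/failure ratio gives
`p (n_F + n_S K) = (1 + p (K - 1)) n_S`, so the energy constraint becomes linear in `T` and `n_S`.
The service-rate equation expresses `n_S` through `T`; eliminating `n_S` leaves
`T · n D = (E / σ) · n (1 - c (K - 1))`, where `D` is the claimed denominator. Since `log p < 0`,
every term subtracted in `D` is nonpositive, so `D ≥ P_W > 0` and one can divide.
-/

theorem mul_eq_mul_of_div_eq_div_of_ne_zero {F : Type*} [Field F] {a b c d : F}
    (h : a / b = c / d) (hcd : c / d ≠ 0) : a * d = c * b := by
  have hb : b ≠ 0 := by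
    rintro rfl
    exact hcd (by rw [← h, div_zero])
  have hd : d ≠ 0 := by
    rintro rfl
    exact hcd (div_zero c)
  exact (div_eq_div_iff hb hd).mp h

section Balance

variable {F : Type*} [Field F] {n K P_W P_T p L X n_W n_F n_S T : F}

theorem energy_balance_of_ratio (hratio : n_S * (1 - p) = p * n_F)
    (hT : T = n_W + n_F + n_S * K) (henergy : P_W * n_W + P_T * (n_F + n_S * K) = X) :
    p * X = p * P_W * T + (P_T - P_W) * (1 + p * (K - 1)) * n_S := by
  linear_combination (-p) * henergy - p * P_W * hT - (P_T - P_W) * hratio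

theorem lifetime_mul_eq (hp : p ≠ 0) (hratio : n_S * (1 - p) = p * n_F)
    (hT : T = n_W + n_F + n_S * K) (henergy : P_W * n_W + P_T * (n_F + n_S * K) = X)
    (hrate : n_S * (n * p * L * (K - 1) - n) = p * L * T) :
    T * (n * P_W - ((n - 1) * P_W + P_T) * (K - 1) * p * L - (P_T - P_W) * L) =
      X * n * (1 - p * L * (K - 1)) := by
  have hbalance := energy_balance_of_ratio hratio hT henergy
  refine mul_left_cancel₀ hp ?_
  linear_combination (p * L * (K - 1) * n - n) * hbalance +
    (P_T - P_W) * (1 + p * (K - 1)) * hrate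

end Balance

section Signs

variable {n K P_W P_T p L : ℝ}

theorem rate_denom_neg (hn : 0 < n) (hK : 1 ≤ K) (hpL : p * L ≤ 0) :
    n * p * L * (K - 1) - n < 0 := by
  have : p * L * (K - 1) ≤ 0 := mul_nonpos_of_nonpos_of_nonneg hpL (by linarith)
  nlinarith

theorem lifetime_denom_pos (hn : 1 ≤ n) (hK : 1 ≤ K) (hPW : 0 < P_W) (hPT : P_W ≤ P_T)
    (hp : 0 ≤ p) (hL : L ≤ 0) :
    0 < P_W - ((n - 1) * P_W + P_T) * (K - 1) * p * L / n - (P_T - P_W) * L / n := by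
  have hn0 : 0 ≤ n := by linarith
  have hcoef : 0 ≤ ((n - 1) * P_W + P_T) * (K - 1) * p := by
    have hnPW : 0 ≤ (n - 1) * P_W := mul_nonneg (by linarith) hPW.le
    exact mul_nonneg (mul_nonneg (by linarith) (by linarith)) hp
  have h₁ : ((n - 1) * P_W + P_T) * (K - 1) * p * L / n ≤ 0 :=
    div_nonpos_of_nonpos_of_nonneg (mul_nonpos_of_nonneg_of_nonpos hcoef hL) hn0
  have h₂ : (P_T - P_W) * L / n ≤ 0 :=
    div_nonpos_of_nonpos_of_nonneg (mul_nonpos_of_nonneg_of_nonpos (by linarith) hL) hn0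
  linarith

end Signs

theorem stmt14_general (n M δ E σ P_T P_W p n_I n_W n_F n_S T : ℝ)
    (hn : 1 ≤ n) (hM : 1 ≤ M) (hδ : 0 ≤ δ)
    (hPW : 0 < P_W) (hPT : P_W ≤ P_T) (hp : p ∈ Set.Ioo (0 : ℝ) 1)
    (hratio : n_S / n_F = p / (1 - p))
    (hTdef : T = n_I + n_W + n_F + n_S * (M + δ))
    (henergy : P_W * (n_I + n_W) + P_T * (n_F + n_S * (M + δ)) = E / σ)
    (hsat : n_I = 0)
    (hrate : n_S / T = p * Real.log p / (n * p * Real.log p * (M + δ - 1) - n)) :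
    T = (E / σ) * (1 - p * Real.log p * (M + δ - 1)) /
      (P_W - ((n - 1) * P_W + P_T) * (M + δ - 1) * p * Real.log p / n -
        (P_T - P_W) * Real.log p / n) := by
  obtain ⟨hp0, hp1⟩ := hp
  have hL : Real.log p < 0 := Real.log_neg hp0 hp1
  have hK : 1 ≤ M + δ := by linarith
  have hratio' := mul_eq_mul_of_div_eq_div_of_ne_zero hratio
    (div_ne_zero hp0.ne' (sub_ne_zero.2 hp1.ne'))
  have hrate' := mul_eq_mul_of_div_eq_div_of_ne_zero hrate
    (div_ne_zero (mul_neg_of_pos_of_neg hp0 hL).ne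
      (rate_denom_neg (by linarith) hK (mul_neg_of_pos_of_neg hp0 hL).le).ne)
  rw [hsat, zero_add] at hTdef henergy
  have key := lifetime_mul_eq hp0.ne' hratio' hTdef henergy hrate'
  rw [eq_div_iff (lifetime_denom_pos hn hK hPW hPT hp0.le hL.le).ne']
  field_simp
  linear_combination key

/-- Saturated-case lifetime derivation (Lemma 1): the balance equations determine
`T` in closed form. -/
theorem stmt14 (n M δ E σ P_T P_W p n_I n_W n_F n_S T : ℝ)
    (hn : 1 ≤ n) (hM : 1 ≤ M) (hδ : 0 ≤ δ) (hE : 0 < E) (hσ : 0 < σ)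
    (hPW : 0 < P_W) (hPT : P_W ≤ P_T) (hp : p ∈ Set.Ioo (0 : ℝ) 1)
    (hI : 0 ≤ n_I) (hW : 0 ≤ n_W) (hF : 0 ≤ n_F) (hS : 0 ≤ n_S)
    (hratio : n_S / n_F = p / (1 - p))
    (hTdef : T = n_I + n_W + n_F + n_S * (M + δ))
    (henergy : P_W * (n_I + n_W) + P_T * (n_F + n_S * (M + δ)) = E / σ)
    (hsat : n_I = 0)
    (hrate : n_S / T = p * Real.log p / (n * p * Real.log p * (M + δ - 1) - n)) :
    T = (E / σ) * (1 - p * Real.log p * (M + δ - 1)) /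
      (P_W - ((n - 1) * P_W + P_T) * (M + δ - 1) * p * Real.log p / n -
        (P_T - P_W) * Real.log p / n) :=
  stmt14_general n M δ E σ P_T P_W p n_I n_W n_F n_S T hn hM hδ hPW hPT hp hratio hTdef henergy hsat
    hrate
end

section
/- Let n ≥ 1, P_T > P_W > 0, and define F(p) = (P_T - P_W)/p - nP_W/(p ln p) on (0,1). If p₁, p₂ ∈ (0,1) with p_m < p₁ < p₂ < 1 where p_m = exp((n - sqrt(n²+4n(P_T/P_W -1)))/(2(P_T/P_W -1))), then F(p₁) < F(p₂). Consequently, for any constrained set {p ∈ (0,1) : p ≥ p_c} with p_c > p_m, the function 1/F is maximized at p = p_c. -/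
/-!
With `L = log p`, the derivative of `a / p - b / (p log p)` is
`(b (L + 1) - a L²) / (p² L²)`, so `F` increases exactly where `a L² - b L - b < 0`, i.e. for
`L` between the roots of this quadratic. The exponent in `p_m` is the negative root (after
dividing `a = P_T - P_W`, `b = n P_W` by `P_W`), so `F` increases on `(p_m, 1)`; since `F > 0`
there, `1 / F` decreases and is largest at the left end `p_c` of the constraint set.
-/

open Real Set

/-- The negative root of `a L² - b L - b`. -/
noncomputable def lowerRoot (a b : ℝ) : ℝ := (b - √(b ^ 2 + 4 * b * a)) / (2 * a)

lemma lowerRoot_mul_mul {c : ℝ} (hc : 0 < c) (a b : ℝ) :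
    lowerRoot (c * a) (c * b) = lowerRoot a b := by
  have hsqrt : √((c * b) ^ 2 + 4 * (c * b) * (c * a)) = c * √(b ^ 2 + 4 * b * a) := by
    rw [show (c * b) ^ 2 + 4 * (c * b) * (c * a) = c ^ 2 * (b ^ 2 + 4 * b * a) by ring,
      sqrt_mul (sq_nonneg c), sqrt_sq hc.le]
  rw [lowerRoot, lowerRoot, hsqrt, ← mul_sub, mul_left_comm, mul_div_mul_left _ _ hc.ne']

lemma quadratic_neg_of_lowerRoot_lt {a b L : ℝ} (ha : 0 < a) (hb : 0 < b)
    (hL : lowerRoot a b < L) (hL0 : L < 0) :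
    a * L ^ 2 - b * L - b < 0 := by
  have hs : √(b ^ 2 + 4 * b * a) ^ 2 = b ^ 2 + 4 * b * a := sq_sqrt (by positivity)
  have hroot : b - 2 * a * L < √(b ^ 2 + 4 * b * a) := by
    rw [lowerRoot, div_lt_iff₀ (by positivity)] at hL
    linarith
  have hsq : (b - 2 * a * L) ^ 2 < b ^ 2 + 4 * b * a := by
    rw [← hs]
    exact pow_lt_pow_left₀ hroot (by nlinarith) two_ne_zero
  nlinarith

lemma hasDerivAt_div_sub_div_mul_log (a b : ℝ) {x : ℝ} (hx0 : 0 < x) (hx1 : x ≠ 1) :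
    HasDerivAt (fun p => a / p - b / (p * log p))
      ((b * (log x + 1) - a * log x ^ 2) / (x ^ 2 * log x ^ 2)) x := by
  have hlog : log x ≠ 0 := log_ne_zero_of_pos_of_ne_one hx0 hx1
  have hplogp : HasDerivAt (fun p => p * log p) (log x + 1) x :=
    ((hasDerivAt_id' x).mul (hasDerivAt_log hx0.ne')).congr_deriv (by field_simp)
  have h := ((hasDerivAt_inv hx0.ne').const_mul a).sub
    ((hplogp.inv (mul_ne_zero hx0.ne' hlog)).const_mul b)
  simp only [← div_eq_mul_inv] at h
  refine h.congr_deriv ?_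
  field_simp
  ring

lemma div_sub_div_mul_log_pos {a b x : ℝ} (ha : 0 < a) (hb : 0 < b) (hx0 : 0 < x)
    (hx1 : x < 1) : 0 < a / x - b / (x * log x) := by
  have hneg : b / (x * log x) < 0 :=
    div_neg_of_pos_of_neg hb (mul_neg_of_pos_of_neg hx0 (log_neg hx0 hx1))
  linarith [div_pos ha hx0]

lemma strictMonoOn_div_sub_div_mul_log {a b : ℝ} (ha : 0 < a) (hb : 0 < b) :
    StrictMonoOn (fun p => a / p - b / (p * log p)) (Ioo (exp (lowerRoot a b)) 1) := by
  have hderiv : ∀ x ∈ Ioo (exp (lowerRoot a b)) 1, HasDerivAt (fun p => a / p - b / (p * log p))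
      ((b * (log x + 1) - a * log x ^ 2) / (x ^ 2 * log x ^ 2)) x := fun x hx =>
    hasDerivAt_div_sub_div_mul_log a b ((exp_pos _).trans hx.1) hx.2.ne
  refine strictMonoOn_of_deriv_pos (convex_Ioo _ _)
    (fun x hx => (hderiv x hx).continuousAt.continuousWithinAt) fun x hx => ?_
  rw [interior_Ioo] at hx
  have hx0 : 0 < x := (exp_pos _).trans hx.1
  have hL0 : log x < 0 := log_neg hx0 hx.2
  have hquad := quadratic_neg_of_lowerRoot_lt ha hb ((lt_log_iff_exp_lt hx0).2 hx.1) hL0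
  rw [(hderiv x hx).deriv]
  exact div_pos (by linarith) (mul_pos (pow_pos hx0 2) (sq_pos_of_neg hL0))

/-- `F` is strictly increasing past `p_m`; hence on the constrained set `{p ≥ p_c}` with
`p_c > p_m`, `1/F` is maximized at `p_c`. -/
theorem stmt15 (n P_T P_W : ℝ) (hn : 1 ≤ n) (hPW : 0 < P_W) (hPT : P_W < P_T)
    (p_m : ℝ)
    (hpm : p_m = Real.exp ((n - Real.sqrt (n ^ 2 + 4 * n * (P_T / P_W - 1))) /
      (2 * (P_T / P_W - 1))))
    (F : ℝ → ℝ)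
    (hF : ∀ p, F p = (P_T - P_W) / p - n * P_W / (p * Real.log p)) :
    (∀ p₁ p₂ : ℝ, p_m < p₁ → p₁ < p₂ → p₂ < 1 → F p₁ < F p₂) ∧
    (∀ p_c : ℝ, p_m < p_c → p_c < 1 →
      ∀ p ∈ Set.Ioo (0 : ℝ) 1, p_c ≤ p → 1 / F p ≤ 1 / F p_c) := by
  have ha : 0 < P_T - P_W := sub_pos.2 hPT
  have hb : 0 < n * P_W := mul_pos (by linarith) hPW
  have hpm' : p_m = exp (lowerRoot (P_T - P_W) (n * P_W)) := by
    rw [hpm, show P_T - P_W = P_W * (P_T / P_W - 1) by field_simp, mul_comm n,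
      lowerRoot_mul_mul hPW, lowerRoot]
  have hmono : StrictMonoOn F (Ioo p_m 1) := by
    rw [funext hF, hpm']
    exact strictMonoOn_div_sub_div_mul_log ha hb
  refine ⟨fun p₁ p₂ h₁ h₁₂ h₂ => hmono ⟨h₁, h₁₂.trans h₂⟩ ⟨h₁.trans h₁₂, h₂⟩ h₁₂,
    fun p_c hc hc1 p hp hcp => ?_⟩
  have hFc : 0 < F p_c := by
    rw [hF]
    exact div_sub_div_mul_log_pos ha hb ((hpm' ▸ exp_pos _).trans hc) hc1
  exact one_div_le_one_div_of_le hFc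
    ((hmono.le_iff_le ⟨hc, hc1⟩ ⟨hc.trans_le hcp, hp.2⟩).2 hcp)
end
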